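/- Let V be a normed real vector space and α a bounded alternating k-linear form on V with operator norm ‖α‖. Suppose v₁,…,v_k are unit vectors, each decomposed as v_i = v_i^P + v_i^T, and suppose T : V → V is a linear map satisfying ‖T(v_i^P)‖ ≤ e^{-t}‖v_i^P‖ and ‖T(v_i^T)‖ ≤ ‖v_i^T‖ with ‖v_i^P‖ ≤ 1, ‖v_i^T‖ ≤ 1 for all i, and suppose α(T e₁, …, T e_k) = 0 whenever at least two of the e_j equal v_j^T. Then |α(T v₁, …, T v_k)| ≤ e^{-(k-1)t}(k + e^{-t})‖α‖. -/

import Mathlib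

/-!
Expanding `α (x + y)` multilinearly gives `∑ S, α (S.piecewise x y)`. If every summand with at
least two entries taken from `y` vanishes, only `S = univ` and the `k` sets `univ.erase j`
survive; bounding them by the operator norm, with `‖x i‖ ≤ a` and `‖y i‖ ≤ b`, gives
`‖α (x + y)‖ ≤ ‖α‖ (a ^ k + k a ^ (k - 1) b)`. For `a = e^{-t}`, `b = 1` this is the claim.
-/

open Finset

theorem Fintype.sum_finset_eq_univ_add_sum_erase {ι M : Type*} [Fintype ι] [DecidableEq ι]
    [AddCommMonoid M] (f : Finset ι → M) (hf : ∀ S : Finset ι, 2 ≤ #Sᶜ → f S = 0) :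
    ∑ S, f S = f univ + ∑ j, f (univ.erase j) := by
  rw [← Equiv.sum_comp (Function.Involutive.toPerm _ compl_involutive)]
  have hsmall : ∑ T, f Tᶜ = ∑ T ∈ insert ∅ (univ.map ⟨singleton, singleton_injective⟩), f Tᶜ := by
    refine (Finset.sum_subset (subset_univ _) fun T _ hT => hf _ ?_).symm
    simp only [mem_insert, mem_map, mem_univ, true_and, Function.Embedding.coeFn_mk,
      not_or, not_exists] at hT
    rw [compl_compl]
    by_contra! hcard
    interval_cases h : #T
    · exact hT.1 (Finset.card_eq_zero.1 h)
    · obtain ⟨j, rfl⟩ := Finset.card_eq_one.1 h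
      exact hT.2 j rfl
  rw [Function.Involutive.coe_toPerm, hsmall, sum_insert (by simp), sum_map]
  simp [compl_singleton]

namespace ContinuousMultilinearMap

variable {𝕜 ι G : Type*} [NontriviallyNormedField 𝕜] [Fintype ι] [DecidableEq ι]
  {E : ι → Type*} [∀ i, SeminormedAddCommGroup (E i)] [∀ i, NormedSpace 𝕜 (E i)]
  [SeminormedAddCommGroup G] [NormedSpace 𝕜 G]

theorem norm_map_piecewise_le (α : ContinuousMultilinearMap 𝕜 E G) {x y : ∀ i, E i} {a b : ℝ}
    (hx : ∀ i, ‖x i‖ ≤ a) (hy : ∀ i, ‖y i‖ ≤ b) (S : Finset ι) :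
    ‖α (S.piecewise x y)‖ ≤ ‖α‖ * (a ^ #S * b ^ #Sᶜ) := by
  have hbound : ∀ i, ‖S.piecewise x y i‖ ≤ S.piecewise (fun _ => a) (fun _ => b) i := by
    intro i
    by_cases hi : i ∈ S <;> simp [hi, hx, hy]
  refine (α.le_opNorm_mul_prod_of_le hbound).trans_eq ?_
  rw [prod_piecewise, univ_inter, ← compl_eq_univ_sdiff, prod_const, prod_const]

theorem norm_map_add_le_of_map_piecewise_eq_zero (α : ContinuousMultilinearMap 𝕜 E G)
    {x y : ∀ i, E i} {a b : ℝ} (hx : ∀ i, ‖x i‖ ≤ a) (hy : ∀ i, ‖y i‖ ≤ b)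
    (hvanish : ∀ S : Finset ι, 2 ≤ #Sᶜ → α (S.piecewise x y) = 0) :
    ‖α (x + y)‖ ≤
      ‖α‖ * (a ^ Fintype.card ι + Fintype.card ι * (a ^ (Fintype.card ι - 1) * b)) := by
  rw [α.map_add_univ, Fintype.sum_finset_eq_univ_add_sum_erase _ hvanish]
  calc ‖α (univ.piecewise x y) + ∑ j, α ((univ.erase j).piecewise x y)‖
      ≤ ‖α (univ.piecewise x y)‖ + ∑ j, ‖α ((univ.erase j).piecewise x y)‖ :=
        (norm_add_le _ _).trans (add_le_add_right (norm_sum_le _ _) _)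
    _ ≤ ‖α‖ * a ^ Fintype.card ι + ∑ _j : ι, ‖α‖ * (a ^ (Fintype.card ι - 1) * b) := by
        gcongr with j
        · simpa using α.norm_map_piecewise_le hx hy univ
        · simpa [← compl_singleton, card_compl] using α.norm_map_piecewise_le hx hy (univ.erase j)
    _ = _ := by simp only [sum_const, card_univ, nsmul_eq_mul]; ring

end ContinuousMultilinearMap

theorem abs_alternating_apply_le_of_decomposition_general
    {V : Type*} [NormedAddCommGroup V] [NormedSpace ℝ V]
    {k : ℕ} (hk : 2 ≤ k) (α : ContinuousMultilinearMap ℝ (fun _ : Fin k => V) ℝ)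
    (v vP vT : Fin k → V) (T : V →ₗ[ℝ] V) (t : ℝ)
    (hdecomp : ∀ i, v i = vP i + vT i)
    (hP : ∀ i, ‖T (vP i)‖ ≤ Real.exp (-t) * ‖vP i‖)
    (hT : ∀ i, ‖T (vT i)‖ ≤ ‖vT i‖)
    (hPle : ∀ i, ‖vP i‖ ≤ 1) (hTle : ∀ i, ‖vT i‖ ≤ 1)
    (hvanish : ∀ e : Fin k → V, (∀ i, e i = vP i ∨ e i = vT i) →
      (∃ i j, i ≠ j ∧ e i = vT i ∧ e j = vT j) → α (fun i => T (e i)) = 0) :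
    |α (fun i => T (v i))| ≤
      Real.exp (-((k : ℝ) - 1) * t) * ((k : ℝ) + Real.exp (-t)) * ‖α‖ := by
  have hsplit : (fun i => T (v i)) = (fun i => T (vP i)) + fun i => T (vT i) := by
    ext i; simp [hdecomp i]
  have hpiecewise : ∀ S : Finset (Fin k), 2 ≤ #Sᶜ →
      α (S.piecewise (fun i => T (vP i)) fun i => T (vT i)) = 0 := by
    intro S hS
    obtain ⟨i, hi, j, hj, hij⟩ := one_lt_card.1 hS
    rw [mem_compl] at hi hj
    convert hvanish (S.piecewise vP vT) (fun l => ?_) ⟨i, j, hij, by simp [hi], by simp [hj]⟩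
      using 2
    · ext l; by_cases hl : l ∈ S <;> simp [hl]
    · by_cases hl : l ∈ S <;> simp [hl]
  have hbound := α.norm_map_add_le_of_map_piecewise_eq_zero
    (fun i => (hP i).trans (mul_le_of_le_one_right (Real.exp_pos _).le (hPle i)))
    (fun i => (hT i).trans (hTle i)) hpiecewise
  obtain ⟨m, rfl⟩ := Nat.exists_eq_add_of_le' (one_le_two.trans hk)
  have hexp : Real.exp (-((↑(m + 1) : ℝ) - 1) * t) = Real.exp (-t) ^ m := by
    rw [← Real.exp_nat_mul]; push_cast; ring_nf
  rw [← Real.norm_eq_abs, hsplit, hexp]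
  refine hbound.trans_eq ?_
  simp only [Fintype.card_fin, add_tsub_cancel_right, mul_one]
  push_cast
  ring

/-- The multilinear estimate: for a bounded alternating `k`-form `α`, unit vectors
`v i = vP i + vT i` with `‖T (vP i)‖ ≤ e^{-t} ‖vP i‖`, `‖T (vT i)‖ ≤ ‖vT i‖`,
`‖vP i‖ ≤ 1`, `‖vT i‖ ≤ 1`, and `α` vanishing on the images under `T` of tuples
with at least two tangential entries, one has
`|α (T v₁, …, T v_k)| ≤ e^{-(k-1)t} (k + e^{-t}) ‖α‖`. -/
theorem abs_alternating_apply_le_of_decomposition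
    {V : Type*} [NormedAddCommGroup V] [NormedSpace ℝ V]
    {k : ℕ} (hk : 2 ≤ k) (α : ContinuousMultilinearMap ℝ (fun _ : Fin k => V) ℝ)
    (halt : ∀ (w : Fin k → V) (i j : Fin k), i ≠ j → w i = w j → α w = 0)
    (v vP vT : Fin k → V) (T : V →ₗ[ℝ] V) (t : ℝ) (ht : 0 ≤ t)
    (hdecomp : ∀ i, v i = vP i + vT i)
    (hunit : ∀ i, ‖v i‖ = 1)
    (hP : ∀ i, ‖T (vP i)‖ ≤ Real.exp (-t) * ‖vP i‖)
    (hT : ∀ i, ‖T (vT i)‖ ≤ ‖vT i‖)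
    (hPle : ∀ i, ‖vP i‖ ≤ 1) (hTle : ∀ i, ‖vT i‖ ≤ 1)
    (hvanish : ∀ e : Fin k → V, (∀ i, e i = vP i ∨ e i = vT i) →
      (∃ i j, i ≠ j ∧ e i = vT i ∧ e j = vT j) → α (fun i => T (e i)) = 0) :
    |α (fun i => T (v i))| ≤
      Real.exp (-((k : ℝ) - 1) * t) * ((k : ℝ) + Real.exp (-t)) * ‖α‖ :=
  abs_alternating_apply_le_of_decomposition_general hk α v vP vT T t hdecomp hP hT hPle hTle hvanish
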